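/- arXiv:1506.06930 — 2 statements merged into one kernel-verified Lean document; each statement's English description precedes it below -/
import Mathlib

section
/- Let h, f, g be functions on ℝ^d with x·h ∈ L^{p₁}, ∇f ∈ L^∞, g ∈ L^{p₂}, where 1 ≤ p, p₁, p₂ ≤ ∞ satisfy 1 + 1/p = 1/p₁ + 1/p₂. Then the commutator of convolution with multiplication satisfies ‖h ⋆ (f g) − f (h ⋆ g)‖_{L^p} ≤ C ‖x h‖_{L^{p₁}} ‖∇f‖_{L^∞} ‖g‖_{L^{p₂}} for a constant C independent of f, g, h. -/
/-!
The commutator is `∫ h(y) (f(x - y) - f(x)) g(x - y) dy`. A differentiable `f` with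
`‖∇f‖ ≤ L` almost everywhere is `L`-Lipschitz (the bound holds along almost every segment, and
`f` is continuous), so the commutator is dominated pointwise by `L · (K ⋆ G)(x)` with
`K(y) = |y| |h(y)|` and `G = |g|`. Young's convolution inequality
`‖K ⋆ G‖_p ≤ ‖K‖_{p₁} ‖G‖_{p₂}` then gives the estimate with `C = 1`.

For `p = ∞` Young's inequality is Hölder's inequality. For `p < ∞` the three-function Hölder
inequality applied to the factorisation
`K(y) G(x - y) = (K(y)^{p₁} G(x - y)^{p₂})^{1/p} · K(y)^{p₁(1 - 1/p₂)} · G(x - y)^{p₂(1 - 1/p₁)}`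
bounds `(K ⋆ G)(x)^p` by `(K^{p₁} ⋆ G^{p₂})(x) ‖K‖_{p₁}^{p - p₁} ‖G‖_{p₂}^{p - p₂}`, and
`∫ K^{p₁} ⋆ G^{p₂} = ‖K‖_{p₁}^{p₁} ‖G‖_{p₂}^{p₂}` by Tonelli.
-/

open MeasureTheory ENNReal

namespace MeasureTheory

variable {α : Type*} [MeasurableSpace α] {μ : Measure α}

theorem lintegral_mul_le_eLpNorm_top_mul_eLpNorm_one (f : α → ℝ≥0∞) {g : α → ℝ≥0∞}
    (hg : AEMeasurable g μ) : ∫⁻ a, f a * g a ∂μ ≤ eLpNorm f ∞ μ * eLpNorm g 1 μ := by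
  rw [eLpNorm_one_eq_lintegral_enorm, eLpNorm_exponent_top, ← lintegral_const_mul'' _ hg.enorm]
  refine lintegral_mono_ae ?_
  filter_upwards [enorm_ae_le_eLpNormEssSup f μ] with a ha
  simpa using mul_le_mul_left ha (g a)

theorem lintegral_mul_le_eLpNorm_mul_eLpNorm {p q : ℝ≥0∞} [p.HolderConjugate q]
    {f g : α → ℝ≥0∞} (hf : AEMeasurable f μ) (hg : AEMeasurable g μ) :
    ∫⁻ a, f a * g a ∂μ ≤ eLpNorm f p μ * eLpNorm g q μ := by
  by_cases hp : p = ∞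
  · obtain rfl := hp
    obtain rfl := (HolderConjugate.eq_top_iff_eq_one ∞ q).1 rfl
    exact lintegral_mul_le_eLpNorm_top_mul_eLpNorm_one f hg
  by_cases hq : q = ∞
  · obtain rfl := hq
    obtain rfl := (HolderConjugate.eq_top_iff_eq_one ∞ p).1 rfl
    simpa only [mul_comm] using lintegral_mul_le_eLpNorm_top_mul_eLpNorm_one g hf
  rw [eLpNorm_eq_lintegral_rpow_enorm_toReal (HolderConjugate.ne_zero p q) hp,
    eLpNorm_eq_lintegral_rpow_enorm_toReal (HolderConjugate.ne_zero q p) hq]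
  simpa using ENNReal.lintegral_mul_le_Lp_mul_Lq μ (HolderConjugate.toReal_of_ne_top hp hq) hf hg

end MeasureTheory

theorem ENNReal.mul_eq_rpow_mul_rpow_mul_rpow (a b : ℝ≥0∞) {r r₁ r₂ : ℝ} (hr : 0 < r)
    (hr₁ : 1 ≤ r₁) (hr₂ : 1 ≤ r₂) (hexp : 1 + 1 / r = 1 / r₁ + 1 / r₂) :
    a * b = (a ^ r₁ * b ^ r₂) ^ (1 / r) * (a ^ r₁) ^ (1 - 1 / r₂) * (b ^ r₂) ^ (1 - 1 / r₁) := by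
  have e₁ : r₁ * (1 / r) + r₁ * (1 - 1 / r₂) = 1 := by
    rw [← mul_add, show 1 / r + (1 - 1 / r₂) = 1 / r₁ by linarith, mul_one_div_cancel (by linarith)]
  have e₂ : r₂ * (1 / r) + r₂ * (1 - 1 / r₁) = 1 := by
    rw [← mul_add, show 1 / r + (1 - 1 / r₁) = 1 / r₂ by linarith, mul_one_div_cancel (by linarith)]
  have h₁ : 0 ≤ 1 - 1 / r₁ := sub_nonneg.2 ((div_le_one (by linarith)).2 hr₁)
  have h₂ : 0 ≤ 1 - 1 / r₂ := sub_nonneg.2 ((div_le_one (by linarith)).2 hr₂)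
  calc a * b = a ^ (r₁ * (1 / r) + r₁ * (1 - 1 / r₂)) * b ^ (r₂ * (1 / r) + r₂ * (1 - 1 / r₁)) := by
        rw [e₁, e₂, rpow_one, rpow_one]
    _ = _ := by
        rw [rpow_add_of_nonneg _ _ (by positivity) (by nlinarith),
          rpow_add_of_nonneg _ _ (by positivity) (by nlinarith),
          mul_rpow_of_nonneg _ _ (by positivity), rpow_mul, rpow_mul, rpow_mul, rpow_mul]
        ring

namespace MeasureTheory

variable {G : Type*} [MeasurableSpace G] [AddGroup G] [MeasurableAdd₂ G] [MeasurableNeg G]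
  {μ : Measure G} [μ.IsAddLeftInvariant] {K F : G → ℝ≥0∞}

theorem lintegral_lconvolution [SFinite μ] (hK : AEMeasurable K μ) (hF : AEMeasurable F μ) :
    ∫⁻ x, (K ⋆ₗ[μ] F) x ∂μ = (∫⁻ y, K y ∂μ) * ∫⁻ y, F y ∂μ := by
  simp only [lconvolution_def]
  rw [lintegral_lintegral_swap (by fun_prop), ← lintegral_mul_const'' _ hK]
  refine lintegral_congr fun y => ?_
  have hF_y : AEMeasurable (fun x => F (-y + x)) μ :=
    hF.comp_quasiMeasurePreserving (measurePreserving_add_left μ (-y)).quasiMeasurePreserving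
  rw [lintegral_const_mul'' _ hF_y, lintegral_add_left_eq_self F (-y)]

variable [μ.IsNegInvariant]

theorem measurePreserving_neg_add (μ : Measure G) [μ.IsAddLeftInvariant] [μ.IsNegInvariant]
    (x : G) : MeasurePreserving (fun y => -y + x) μ μ := by
  simpa [neg_add_rev] using Measure.measurePreserving_add_right_neg μ (-x)

theorem lintegral_neg_add_eq_self (F : G → ℝ≥0∞) (x : G) :
    ∫⁻ y, F (-y + x) ∂μ = ∫⁻ y, F y ∂μ := by
  simpa [neg_add_rev] using lintegral_add_left_eq_self (μ := μ) (fun z => F (-z)) (-x)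
    |>.trans (lintegral_neg_eq_self F)

theorem lconvolution_le_eLpNorm_mul_eLpNorm {p q : ℝ≥0∞} [p.HolderConjugate q]
    (hK : AEMeasurable K μ) (hF : AEMeasurable F μ) (x : G) :
    (K ⋆ₗ[μ] F) x ≤ eLpNorm K p μ * eLpNorm F q μ := by
  have hF_x : AEMeasurable (fun y => F (-y + x)) μ :=
    hF.comp_quasiMeasurePreserving (measurePreserving_neg_add μ x).quasiMeasurePreserving
  calc (K ⋆ₗ[μ] F) x ≤ eLpNorm K p μ * eLpNorm (fun y => F (-y + x)) q μ :=
        lintegral_mul_le_eLpNorm_mul_eLpNorm hK hF_x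
    _ = eLpNorm K p μ * eLpNorm F q μ := by
        rw [← eLpNorm_comp_measurePreserving hF.aestronglyMeasurable
          (measurePreserving_neg_add μ x)]
        rfl

theorem lconvolution_le_rpow_mul_rpow_mul_rpow {r r₁ r₂ : ℝ} (hr : 0 < r) (hr₁ : 1 ≤ r₁)
    (hr₂ : 1 ≤ r₂) (hexp : 1 + 1 / r = 1 / r₁ + 1 / r₂) (hK : AEMeasurable K μ)
    (hF : AEMeasurable F μ) (x : G) :
    (K ⋆ₗ[μ] F) x ≤ ((fun y => K y ^ r₁) ⋆ₗ[μ] fun y => F y ^ r₂) x ^ (1 / r) *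
      (∫⁻ y, K y ^ r₁ ∂μ) ^ (1 - 1 / r₂) * (∫⁻ y, F y ^ r₂ ∂μ) ^ (1 - 1 / r₁) := by
  have hF_x : AEMeasurable (fun y => F (-y + x) ^ r₂) μ :=
    (hF.comp_quasiMeasurePreserving
      (measurePreserving_neg_add μ x).quasiMeasurePreserving).pow_const r₂
  have hmeas : ∀ i ∈ Finset.univ, AEMeasurable
      (![fun y => K y ^ r₁ * F (-y + x) ^ r₂, fun y => K y ^ r₁, fun y => F (-y + x) ^ r₂] i)
      μ := by
    intro i _
    fin_cases i
    exacts [(hK.pow_const r₁).mul hF_x, hK.pow_const r₁, hF_x]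
  have hsum : ∑ i, ![1 / r, 1 - 1 / r₂, 1 - 1 / r₁] i = 1 := by
    simp only [Fin.sum_univ_three, Matrix.cons_val]
    linarith
  have hnonneg : ∀ i ∈ Finset.univ, 0 ≤ ![1 / r, 1 - 1 / r₂, 1 - 1 / r₁] i := by
    intro i _
    fin_cases i
    · exact (one_div_pos.2 hr).le
    · exact sub_nonneg.2 ((div_le_one (by linarith)).2 hr₂)
    · exact sub_nonneg.2 ((div_le_one (by linarith)).2 hr₁)
  have holder := ENNReal.lintegral_prod_norm_pow_le Finset.univ hmeas hsum hnonneg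
  simp only [Fin.prod_univ_three, Matrix.cons_val] at holder
  rw [lintegral_neg_add_eq_self (fun y => F y ^ r₂) x] at holder
  simp only [lconvolution_def]
  simpa only [← ENNReal.mul_eq_rpow_mul_rpow_mul_rpow _ _ hr hr₁ hr₂ hexp] using holder

variable [SFinite μ]

theorem lintegral_lconvolution_rpow_le {r r₁ r₂ : ℝ} (hr : 0 < r) (hr₁ : 1 ≤ r₁)
    (hr₂ : 1 ≤ r₂) (hexp : 1 + 1 / r = 1 / r₁ + 1 / r₂) (hK : AEMeasurable K μ)
    (hF : AEMeasurable F μ) :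
    ∫⁻ x, (K ⋆ₗ[μ] F) x ^ r ∂μ ≤
      (∫⁻ y, K y ^ r₁ ∂μ) ^ (r / r₁) * (∫⁻ y, F y ^ r₂ ∂μ) ^ (r / r₂) := by
  set A := ∫⁻ y, K y ^ r₁ ∂μ
  set B := ∫⁻ y, F y ^ r₂ ∂μ
  set W := (fun y => K y ^ r₁) ⋆ₗ[μ] fun y => F y ^ r₂
  have e₁ : r / r₁ = 1 + r * (1 - 1 / r₂) := by
    rw [div_eq_mul_one_div, show 1 / r₁ = 1 + 1 / r - 1 / r₂ by linarith]
    field_simp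
    ring
  have e₂ : r / r₂ = 1 + r * (1 - 1 / r₁) := by
    rw [div_eq_mul_one_div, show 1 / r₂ = 1 + 1 / r - 1 / r₁ by linarith]
    field_simp
    ring
  have θ₁ : 0 ≤ r * (1 - 1 / r₂) :=
    mul_nonneg hr.le (sub_nonneg.2 ((div_le_one (by linarith)).2 hr₂))
  have θ₂ : 0 ≤ r * (1 - 1 / r₁) :=
    mul_nonneg hr.le (sub_nonneg.2 ((div_le_one (by linarith)).2 hr₁))
  have hpt : ∀ x, (K ⋆ₗ[μ] F) x ^ r ≤
      W x * (A ^ (r * (1 - 1 / r₂)) * B ^ (r * (1 - 1 / r₁))) := fun x => by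
    refine (rpow_le_rpow (lconvolution_le_rpow_mul_rpow_mul_rpow hr hr₁ hr₂ hexp hK hF x)
      hr.le).trans_eq ?_
    rw [mul_rpow_of_nonneg _ _ hr.le, mul_rpow_of_nonneg _ _ hr.le, ← rpow_mul, ← rpow_mul,
      ← rpow_mul, one_div_mul_cancel hr.ne', rpow_one, mul_comm (1 - 1 / r₂),
      mul_comm (1 - 1 / r₁), mul_assoc]
  calc ∫⁻ x, (K ⋆ₗ[μ] F) x ^ r ∂μ
      ≤ ∫⁻ x, W x * (A ^ (r * (1 - 1 / r₂)) * B ^ (r * (1 - 1 / r₁))) ∂μ := lintegral_mono hpt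
    _ = A * B * (A ^ (r * (1 - 1 / r₂)) * B ^ (r * (1 - 1 / r₁))) := by
        rw [lintegral_mul_const'' _ (aemeasurable_lconvolution (hK.pow_const r₁)
          (hF.pow_const r₂)), lintegral_lconvolution (hK.pow_const r₁) (hF.pow_const r₂)]
    _ = A ^ (r / r₁) * B ^ (r / r₂) := by
        rw [e₁, e₂, rpow_add_of_nonneg _ _ zero_le_one θ₁,
          rpow_add_of_nonneg _ _ zero_le_one θ₂, rpow_one, rpow_one]
        ring

theorem eLpNorm_lconvolution_le {p p₁ p₂ : ℝ≥0∞} (hp₁ : 1 ≤ p₁) (hp₂ : 1 ≤ p₂)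
    (hexp : 1 + 1 / p = 1 / p₁ + 1 / p₂) (hK : AEMeasurable K μ) (hF : AEMeasurable F μ) :
    eLpNorm (K ⋆ₗ[μ] F) p μ ≤ eLpNorm K p₁ μ * eLpNorm F p₂ μ := by
  rcases eq_or_ne p 0 with rfl | hp0
  · simp
  rcases eq_or_ne p ∞ with rfl | hp
  · have : p₁.HolderConjugate p₂ := holderConjugate_iff.2 (by simpa using hexp.symm)
    exact eLpNormEssSup_le_of_ae_enorm_bound
      (ae_of_all _ fun x => lconvolution_le_eLpNorm_mul_eLpNorm hK hF x)
  have hsum : 1 < 1 / p₁ + 1 / p₂ :=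
    hexp ▸ ENNReal.lt_add_right one_ne_top (by simpa using hp)
  have hp₁' : p₁ ≠ ∞ := by
    rintro rfl
    exact (ENNReal.inv_le_one.2 hp₂).not_gt (by simpa using hsum)
  have hp₂' : p₂ ≠ ∞ := by
    rintro rfl
    exact (ENNReal.inv_le_one.2 hp₁).not_gt (by simpa using hsum)
  have hr₁ : 1 ≤ p₁.toReal := by simpa using ENNReal.toReal_mono hp₁' hp₁
  have hr₂ : 1 ≤ p₂.toReal := by simpa using ENNReal.toReal_mono hp₂' hp₂
  have hr : 0 < p.toReal := ENNReal.toReal_pos hp0 hp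
  have hexp' : 1 + 1 / p.toReal = 1 / p₁.toReal + 1 / p₂.toReal := by
    have := congrArg ENNReal.toReal hexp
    rwa [ENNReal.toReal_add (by simp) (by simpa using hp0),
      ENNReal.toReal_add (by simpa using (zero_lt_one.trans_le hp₁).ne')
        (by simpa using (zero_lt_one.trans_le hp₂).ne'), toReal_div, toReal_div, toReal_div] at this
  rw [eLpNorm_eq_lintegral_rpow_enorm_toReal hp0 hp,
    eLpNorm_eq_lintegral_rpow_enorm_toReal (zero_lt_one.trans_le hp₁).ne' hp₁',
    eLpNorm_eq_lintegral_rpow_enorm_toReal (zero_lt_one.trans_le hp₂).ne' hp₂']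
  simp only [enorm_eq_self]
  calc (∫⁻ x, (K ⋆ₗ[μ] F) x ^ p.toReal ∂μ) ^ (1 / p.toReal)
      ≤ ((∫⁻ y, K y ^ p₁.toReal ∂μ) ^ (p.toReal / p₁.toReal) *
          (∫⁻ y, F y ^ p₂.toReal ∂μ) ^ (p.toReal / p₂.toReal)) ^ (1 / p.toReal) :=
        rpow_le_rpow (lintegral_lconvolution_rpow_le hr hr₁ hr₂ hexp' hK hF) (by positivity)
    _ = (∫⁻ y, K y ^ p₁.toReal ∂μ) ^ (1 / p₁.toReal) *
          (∫⁻ y, F y ^ p₂.toReal ∂μ) ^ (1 / p₂.toReal) := by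
        rw [mul_rpow_of_nonneg _ _ (by positivity), ← rpow_mul, ← rpow_mul]
        congr 2 <;> field_simp

end MeasureTheory

section

variable {E F : Type*} [NormedAddCommGroup E] [NormedSpace ℝ E] [NormedAddCommGroup F]
  [NormedSpace ℝ F] [CompleteSpace F] {f : E → F}

theorem norm_image_add_sub_le_of_ae_norm_fderiv_le (hf : Differentiable ℝ f) {M : ℝ} (z y : E)
    (hM : ∀ᵐ t : ℝ, ‖fderiv ℝ f (z + t • y)‖ ≤ M) : ‖f (z + y) - f z‖ ≤ M * ‖y‖ := by
  set g : ℝ → F := fun t => f (z + t • y)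
  have hg : ∀ t, HasDerivAt g (fderiv ℝ f (z + t • y) y) t := fun t => by
    have hline : HasDerivAt (fun t : ℝ => z + t • y) y t := by
      simpa using ((hasDerivAt_id t).smul_const y).const_add z
    exact (hf _).hasFDerivAt.comp_hasDerivAt t hline
  have hg' : ∀ᵐ t : ℝ, ‖deriv g t‖ ≤ M * ‖y‖ := hM.mono fun t ht => by
    rw [(hg t).deriv]
    exact (ContinuousLinearMap.le_opNorm _ y).trans (by gcongr)
  have hint : IntervalIntegrable (deriv g) volume 0 1 :=
    (intervalIntegrable_const (c := M * ‖y‖)).mono_fun' (aestronglyMeasurable_deriv g _)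
      (ae_restrict_of_ae hg')
  have ftc := intervalIntegral.integral_deriv_eq_sub (fun t _ => (hg t).differentiableAt) hint
  simp only [g, zero_smul, add_zero, one_smul] at ftc
  rw [← ftc]
  simpa using intervalIntegral.norm_integral_le_of_norm_le_const_ae (a := 0) (b := 1)
    (hg'.mono fun t ht _ => ht)

variable [MeasurableSpace E] [BorelSpace E] [SecondCountableTopology E] {μ : Measure E}
  [μ.IsAddRightInvariant] [SFinite μ]

theorem ae_ae_norm_fderiv_add_smul_le {M : ℝ}
    (hM : ∀ᵐ x ∂μ, ‖fderiv ℝ f x‖ ≤ M) (y : E) :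
    ∀ᵐ z ∂μ, ∀ᵐ t : ℝ, ‖fderiv ℝ f (z + t • y)‖ ≤ M := by
  have hmeas : MeasurableSet {q : E × ℝ | ‖fderiv ℝ f (q.1 + q.2 • y)‖ ≤ M} :=
    measurableSet_le ((measurable_fderiv ℝ f).norm.comp (by fun_prop)) measurable_const
  rw [Measure.ae_ae_comm hmeas]
  exact ae_of_all _ fun t => (measurePreserving_add_right μ (t • y)).quasiMeasurePreserving.ae hM

theorem lipschitzWith_of_ae_nnnorm_fderiv_le [μ.IsOpenPosMeasure]
    (hf : Differentiable ℝ f) {M : NNReal} (hM : ∀ᵐ x ∂μ, ‖fderiv ℝ f x‖₊ ≤ M) :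
    LipschitzWith M f := by
  refine LipschitzWith.of_dist_le_mul fun a b => ?_
  rw [dist_eq_norm, dist_eq_norm]
  have hM' : ∀ᵐ x ∂μ, ‖fderiv ℝ f x‖ ≤ M := hM.mono fun x hx => hx
  have hclosed : IsClosed {z | ‖f (z + (a - b)) - f z‖ ≤ M * ‖a - b‖} :=
    have := hf.continuous
    isClosed_le (by fun_prop) continuous_const
  have hae : ∀ᵐ z ∂μ, ‖f (z + (a - b)) - f z‖ ≤ M * ‖a - b‖ :=
    (ae_ae_norm_fderiv_add_smul_le hM' (a - b)).mono fun z hz =>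
      norm_image_add_sub_le_of_ae_norm_fderiv_le hf z (a - b) hz
  -- a closed set of full measure is dense, hence everything
  have hall := hclosed.closure_eq ▸ (Measure.dense_of_ae hae).closure_eq
  have hb : b ∈ {z | ‖f (z + (a - b)) - f z‖ ≤ M * ‖a - b‖} := hall ▸ Set.mem_univ b
  simpa using hb

end

/-- The Bochner integrals may be junk: if the right side is finite, `A - c • B` is integrable, so
either `A` and `B` are both integrable, or `c = 0`, or neither is and both integrals vanish. -/
theorem enorm_integral_sub_smul_integral_le {α E : Type*} [MeasurableSpace α] {μ : Measure α}
    [NormedAddCommGroup E] [NormedSpace ℝ E] {A B : α → E} (c : ℝ)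
    (hD : AEStronglyMeasurable (fun y => A y - c • B y) μ) :
    ‖∫ y, A y ∂μ - c • ∫ y, B y ∂μ‖ₑ ≤ ∫⁻ y, ‖A y - c • B y‖ₑ ∂μ := by
  by_cases hfin : ∫⁻ y, ‖A y - c • B y‖ₑ ∂μ = ∞
  · simp [hfin]
  have hD' : Integrable (fun y => A y - c • B y) μ := ⟨hD, lt_top_iff_ne_top.2 hfin⟩
  by_cases hB : Integrable B μ
  · have hcB : Integrable (fun y => c • B y) μ := hB.smul c
    have hA : Integrable A μ := (hD'.add hcB).congr (.of_forall fun y => by simp)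
    rw [← integral_smul, ← integral_sub hA hcB]
    exact enorm_integral_le_lintegral_enorm _
  rcases eq_or_ne c 0 with rfl | hc
  · simpa using enorm_integral_le_lintegral_enorm A
  have hA : ¬Integrable A μ := fun hA => hB <|
    ((hA.sub hD').smul c⁻¹).congr (.of_forall fun y => by simp [smul_smul, hc])
  simp [integral_undef hA, integral_undef hB]

section

variable {E : Type*} [NormedAddCommGroup E] [MeasurableSpace E] [BorelSpace E] {μ : Measure E}

theorem aestronglyMeasurable_of_smul_self [InnerProductSpace ℝ E] [FiniteDimensional ℝ E]
    [μ.IsAddHaarMeasure] {h : E → ℝ} (H : AEStronglyMeasurable (fun x => h x • x) μ) :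
    AEStronglyMeasurable h μ := by
  rcases subsingleton_or_nontrivial E with hE | hE
  · exact StronglyMeasurable.of_subsingleton_dom.aestronglyMeasurable
  obtain ⟨ψ, hψ, hae⟩ := H
  refine ⟨fun x => inner ℝ (ψ x) x / ‖x‖ ^ 2,
    (hψ.measurable.inner measurable_id).div (measurable_norm.pow_const 2) |>.stronglyMeasurable, ?_⟩
  filter_upwards [hae, Measure.ae_ne μ 0] with x hx hx0
  rw [← hx, real_inner_smul_left, real_inner_self_eq_norm_sq,
    mul_div_cancel_right₀ _ (pow_ne_zero 2 (norm_ne_zero_iff.2 hx0))]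

variable [NormedSpace ℝ E] [SecondCountableTopology E] [μ.IsAddLeftInvariant] [SFinite μ]

theorem enorm_convolution_mul_sub_mul_convolution_le {h f g : E → ℝ} {M : NNReal}
    (hf : LipschitzWith M f) (hh : AEStronglyMeasurable h μ) (hg : AEStronglyMeasurable g μ)
    (x : E) :
    ‖convolution h (fun y => f y * g y) (ContinuousLinearMap.mul ℝ ℝ) μ x
        - f x * convolution h g (ContinuousLinearMap.mul ℝ ℝ) μ x‖ₑ ≤
      M * ((fun y => ‖h y • y‖ₑ) ⋆ₗ[μ] fun y => ‖g y‖ₑ) x := by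
  have hg_x : AEStronglyMeasurable (fun y => g (x - y)) μ :=
    hg.comp_quasiMeasurePreserving (quasiMeasurePreserving_sub_left μ x)
  have hf_x : AEStronglyMeasurable (fun y => f (x - y)) μ :=
    (hf.continuous.comp (continuous_sub_left x)).aestronglyMeasurable
  simp only [convolution_def, ContinuousLinearMap.mul_apply']
  rw [← smul_eq_mul (f x)]
  refine (enorm_integral_sub_smul_integral_le (f x)
    ((hh.mul (hf_x.mul hg_x)).sub ((hh.mul hg_x).const_smul (f x)))).trans ?_
  rw [lconvolution_def, ← lintegral_const_mul' _ _ coe_ne_top]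
  refine lintegral_mono fun y => ?_
  have hlip : ‖f (x - y) - f x‖ₑ ≤ M * ‖y‖ₑ := by
    simpa [edist_eq_enorm_sub] using hf.edist_le_mul (x - y) x
  calc ‖h y * (f (x - y) * g (x - y)) - f x • (h y * g (x - y))‖ₑ
      = ‖h y‖ₑ * ‖g (x - y)‖ₑ * ‖f (x - y) - f x‖ₑ := by
        rw [← enorm_mul, ← enorm_mul, smul_eq_mul]
        ring_nf
    _ ≤ ‖h y‖ₑ * ‖g (x - y)‖ₑ * (M * ‖y‖ₑ) := by gcongr
    _ = M * (‖h y • y‖ₑ * ‖g (-y + x)‖ₑ) := by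
        rw [enorm_smul, neg_add_eq_sub]
        ring

end

theorem stmt_0_general (d : ℕ) (p p₁ p₂ : ℝ≥0∞) (hp₁ : 1 ≤ p₁) (hp₂ : 1 ≤ p₂)
    (hexp : 1 + 1/p = 1/p₁ + 1/p₂) :
    ∃ C : ℝ≥0∞, C ≠ ⊤ ∧
      ∀ (h f g : EuclideanSpace ℝ (Fin d) → ℝ),
        MemLp (fun x => h x • x : EuclideanSpace ℝ (Fin d) → EuclideanSpace ℝ (Fin d))
          p₁ volume →
        Differentiable ℝ f →
        MemLp (fun x => fderiv ℝ f x) ⊤ volume →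
        MemLp g p₂ volume →
        eLpNorm
          (fun x => convolution h (fun y => f y * g y) (ContinuousLinearMap.mul ℝ ℝ) volume x
            - f x * convolution h g (ContinuousLinearMap.mul ℝ ℝ) volume x) p volume
          ≤ C * eLpNorm (fun x => h x • x : EuclideanSpace ℝ (Fin d) → EuclideanSpace ℝ (Fin d))
                p₁ volume
              * eLpNorm (fun x => fderiv ℝ f x) ⊤ volume
              * eLpNorm g p₂ volume := by
  refine ⟨1, one_ne_top, fun h f g hh hf hf' hg => ?_⟩
  set M := (eLpNorm (fun x => fderiv ℝ f x) ⊤ volume).toNNReal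
  have hM : (M : ℝ≥0∞) = eLpNorm (fun x => fderiv ℝ f x) ⊤ volume :=
    coe_toNNReal hf'.eLpNorm_lt_top.ne
  have hlip : LipschitzWith M f := lipschitzWith_of_ae_nnnorm_fderiv_le (μ := volume) hf <| by
    filter_upwards [enorm_ae_le_eLpNormEssSup (fun x => fderiv ℝ f x) volume] with x hx
    rw [← eLpNorm_exponent_top, ← hM] at hx
    exact_mod_cast hx
  have hh_meas : AEStronglyMeasurable h volume :=
    aestronglyMeasurable_of_smul_self hh.aestronglyMeasurable
  calc _ ≤ M • eLpNorm ((fun y => ‖h y • y‖ₑ) ⋆ₗ fun y => ‖g y‖ₑ) p volume :=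
        eLpNorm_le_nnreal_smul_eLpNorm_of_ae_le_mul' (.of_forall fun x => by
          simpa using enorm_convolution_mul_sub_mul_convolution_le hlip hh_meas
            hg.aestronglyMeasurable x) p
    _ ≤ M • (eLpNorm (fun y => ‖h y • y‖ₑ) p₁ volume * eLpNorm (fun y => ‖g y‖ₑ) p₂ volume) := by
        gcongr
        exact eLpNorm_lconvolution_le hp₁ hp₂ hexp hh.aestronglyMeasurable.enorm
          hg.aestronglyMeasurable.enorm
    _ = _ := by
        rw [eLpNorm_enorm, eLpNorm_enorm, ENNReal.smul_def, hM, smul_eq_mul]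
        ring

/-- Lemma 2.6: if `1 + 1/p = 1/p₁ + 1/p₂`, `x·h ∈ L^{p₁}`, `∇f ∈ L^∞` and
`g ∈ L^{p₂}`, then `‖h ⋆ (fg) − f (h ⋆ g)‖_{L^p} ≤ C ‖x h‖_{L^{p₁}} ‖∇f‖_{L^∞} ‖g‖_{L^{p₂}}`
with `C` independent of `f, g, h`. -/
theorem stmt_0 (d : ℕ) (p p₁ p₂ : ℝ≥0∞) (hp : 1 ≤ p) (hp₁ : 1 ≤ p₁) (hp₂ : 1 ≤ p₂)
    (hexp : 1 + 1/p = 1/p₁ + 1/p₂) :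
    ∃ C : ℝ≥0∞, C ≠ ⊤ ∧
      ∀ (h f g : EuclideanSpace ℝ (Fin d) → ℝ),
        MemLp (fun x => h x • x : EuclideanSpace ℝ (Fin d) → EuclideanSpace ℝ (Fin d))
          p₁ volume →
        Differentiable ℝ f →
        MemLp (fun x => fderiv ℝ f x) ⊤ volume →
        MemLp g p₂ volume →
        eLpNorm
          (fun x => convolution h (fun y => f y * g y) (ContinuousLinearMap.mul ℝ ℝ) volume x
            - f x * convolution h g (ContinuousLinearMap.mul ℝ ℝ) volume x) p volume
          ≤ C * eLpNorm (fun x => h x • x : EuclideanSpace ℝ (Fin d) → EuclideanSpace ℝ (Fin d))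
                p₁ volume
              * eLpNorm (fun x => fderiv ℝ f x) ⊤ volume
              * eLpNorm g p₂ volume :=
  stmt_0_general d p p₁ p₂ hp₁ hp₂ hexp
end

section
/- Let η > 0, α ≥ 0, and let (v, θ) solve the linear system ∂_t v + α v − η Δv − ∇θ = 0, ∂_t θ − div v = 0 on ℝ⁺ × ℝ² with smooth rapidly decaying data. Define ℛ = Λ^{−1} div (a Fourier multiplier with symbol iξ/|ξ| acting on vector fields) and Ω = ℛv + η Λθ. Then Ω satisfies the damped equation ∂_t Ω + (1/η) Ω = (1/η − α) ℛv. -/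
/-!
With Mathlib's normalisation `𝓕f(ξ) = ∫ e^{-2πi⟪x, ξ⟫} f(x) dx`, on the Fourier side the system
reads `∂ₜv̂ᵢ = 2πiξᵢθ̂ - (4π²η|ξ|² + α)v̂ᵢ` and `∂ₜθ̂ = 2πi ξ·v̂`.
Inserting this into the symbols of `ℛ∂ₜv` and `Λ∂ₜθ`, the transform of
`∂ₜℛv + η∂ₜΛθ + Λθ + αℛv` vanishes at every `ξ ≠ 0`: the viscous term of `∂ₜℛv` cancels against
`η∂ₜΛθ`, its pressure term against `Λθ`, and its damping term against `αℛv`. Being continuous and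
integrable, this function therefore vanishes by Fourier inversion, and dividing by `η` gives the
damped equation for `Ω`.
-/

open MeasureTheory Real FourierTransform

noncomputable section

open scoped RealInnerProductSpace
open LineDeriv

namespace SchwartzMap

section Postcomp

variable {V F G : Type*} [NormedAddCommGroup V] [NormedSpace ℝ V]
  [NormedAddCommGroup F] [NormedSpace ℝ F] [NormedAddCommGroup G] [NormedSpace ℝ G]

theorem lineDerivOp_postcompCLM (L : F →L[ℝ] G) (f : 𝓢(V, F)) (m : V) :
    ∂_{m} (f.postcompCLM L) = (∂_{m} f).postcompCLM L := by
  ext x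
  change fderiv ℝ (L ∘ f) x m = L (fderiv ℝ f x m)
  rw [(L.hasFDerivAt.comp x (f.hasFDerivAt x)).fderiv]
  rfl

end Postcomp

variable {V : Type*} [NormedAddCommGroup V] [InnerProductSpace ℝ V] [FiniteDimensional ℝ V]
  [MeasurableSpace V] [BorelSpace V]

def realFourierCLM : 𝓢(V, ℝ) →L[ℝ] 𝓢(V, ℂ) :=
  fourierCLM ℝ 𝓢(V, ℂ) ∘L postcompCLM Complex.ofRealCLM

theorem realFourierCLM_apply (f : 𝓢(V, ℝ)) (ξ : V) :
    realFourierCLM f ξ = 𝓕 (fun x ↦ (f x : ℂ)) ξ := rfl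

theorem realFourierCLM_lineDerivOp (f : 𝓢(V, ℝ)) (m ξ : V) :
    realFourierCLM (∂_{m} f) ξ = 2 * π * Complex.I * ⟪ξ, m⟫ * realFourierCLM f ξ := by
  have : (inner ℝ · m).HasTemperateGrowth := ((innerSL ℝ).flip m).hasTemperateGrowth
  simp only [realFourierCLM, ContinuousLinearMap.comp_apply, fourierCLM_apply,
    ← lineDerivOp_postcompCLM, fourier_lineDerivOp_eq, smul_apply, smulLeftCLM_apply_apply this]
  simp [smul_eq_mul, mul_assoc]

end SchwartzMap

section FourierIntegral

variable {V E : Type*} [NormedAddCommGroup V] [InnerProductSpace ℝ V] [FiniteDimensional ℝ V]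
  [MeasurableSpace V] [BorelSpace V] [NormedAddCommGroup E] [NormedSpace ℂ E]

theorem Real.fourier_add_of_integrable {f g : V → E} (hf : Integrable f) (hg : Integrable g) :
    𝓕 (f + g) = 𝓕 f + 𝓕 g :=
  VectorFourier.fourierIntegral_add continuous_fourierChar continuous_inner hf hg

theorem Real.fourier_const_smul (c : ℂ) (f : V → E) : 𝓕 (c • f) = c • 𝓕 f :=
  VectorFourier.fourierIntegral_const_smul _ _ _ f c

theorem Real.eq_zero_of_fourier_eq_zero_of_ne_zero [Nontrivial V] [CompleteSpace E] {g : V → E}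
    (hc : Continuous g) (hi : Integrable g) (hz : ∀ ξ ≠ 0, 𝓕 g ξ = 0) : g = 0 := by
  have hzero : 𝓕 g = 0 :=
    (VectorFourier.fourierIntegral_continuous continuous_fourierChar continuous_inner hi).ext_on
      (dense_compl_singleton 0) continuous_const hz
  ext1 x
  rw [← hi.fourierInv_fourier_eq (by rw [hzero]; exact integrable_zero _ _ _) hc.continuousAt,
    hzero]
  simp [fourierInv_eq]

theorem Real.eq_zero_of_fourier_ofReal_eq_zero_of_ne_zero [Nontrivial V] {g : V → ℝ}
    (hc : Continuous g) (hi : Integrable g) (hz : ∀ ξ ≠ 0, 𝓕 (fun x ↦ (g x : ℂ)) ξ = 0) :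
    g = 0 := by
  have h := Real.eq_zero_of_fourier_eq_zero_of_ne_zero (Complex.continuous_ofReal.comp hc)
    hi.ofReal hz
  ext1 x
  simpa using congrFun h x

end FourierIntegral

theorem EuclideanSpace.sum_ofReal_sq {ι : Type*} [Fintype ι] (ξ : EuclideanSpace ℝ ι) :
    ∑ j, (ξ j : ℂ) ^ 2 = (‖ξ‖ : ℂ) ^ 2 := by
  exact_mod_cast (EuclideanSpace.real_norm_sq_eq ξ).symm

section LinearSystem

open SchwartzMap

variable {ι : Type*} [Fintype ι] [DecidableEq ι]

theorem fourier_ofReal_eq_of_eq_div (v : 𝓢(EuclideanSpace ℝ ι, EuclideanSpace ℝ ι))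
    {θt : EuclideanSpace ℝ ι → ℝ}
    (h : ∀ x, θt x - ∑ j, fderiv ℝ (fun y ↦ v y j) x (EuclideanSpace.single j 1) = 0)
    (ξ : EuclideanSpace ℝ ι) :
    𝓕 (fun x ↦ (θt x : ℂ)) ξ = 2 * π * Complex.I * ∑ j, ξ j * 𝓕 (fun x ↦ (v x j : ℂ)) ξ := by
  let vc (j : ι) : 𝓢(EuclideanSpace ℝ ι, ℝ) := v.postcompCLM (EuclideanSpace.proj j)
  have hθt :
      θt = ⇑(∑ j, ∂_{EuclideanSpace.single j (1 : ℝ)} (vc j) : 𝓢(EuclideanSpace ℝ ι, ℝ)) := by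
    ext x
    rw [sub_eq_zero.1 (h x), sum_apply]
    rfl
  rw [hθt, ← realFourierCLM_apply, map_sum, sum_apply, Finset.mul_sum]
  refine Finset.sum_congr rfl fun j _ ↦ ?_
  rw [realFourierCLM_lineDerivOp, EuclideanSpace.inner_single_right]
  simp only [one_mul, conj_trivial]
  exact mul_assoc _ _ _

theorem fourier_ofReal_eq_of_momentum {η α : ℝ} (v : 𝓢(EuclideanSpace ℝ ι, EuclideanSpace ℝ ι))
    (θ : 𝓢(EuclideanSpace ℝ ι, ℝ)) {vt : EuclideanSpace ℝ ι → EuclideanSpace ℝ ι}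
    (h : ∀ x i, vt x i + α * v x i
        - η * (∑ j : ι, fderiv ℝ
            (fun y ↦ fderiv ℝ (fun z ↦ v z i) y (EuclideanSpace.single j 1)) x
            (EuclideanSpace.single j 1))
        - fderiv ℝ (fun y ↦ θ y) x (EuclideanSpace.single i 1) = 0)
    (i : ι) (ξ : EuclideanSpace ℝ ι) :
    𝓕 (fun x ↦ (vt x i : ℂ)) ξ = 2 * π * Complex.I * ξ i * 𝓕 (fun x ↦ (θ x : ℂ)) ξ
      - (4 * π ^ 2 * η * ‖ξ‖ ^ 2 + α) * 𝓕 (fun x ↦ (v x i : ℂ)) ξ := by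
  let vi : 𝓢(EuclideanSpace ℝ ι, ℝ) := v.postcompCLM (EuclideanSpace.proj i)
  have hvi : ⇑vi = fun z ↦ v z i := rfl
  have hderiv (f : 𝓢(EuclideanSpace ℝ ι, ℝ)) (m : EuclideanSpace ℝ ι) :
      ⇑(∂_{m} f : 𝓢(EuclideanSpace ℝ ι, ℝ)) = fun y ↦ fderiv ℝ f y m := rfl
  have hvt : ∀ x, vt x i = (∂_{EuclideanSpace.single i (1 : ℝ)} θ
      + η • ∑ j : ι, ∂_{EuclideanSpace.single j (1 : ℝ)} (∂_{EuclideanSpace.single j (1 : ℝ)} vi)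
      - α • vi : 𝓢(EuclideanSpace ℝ ι, ℝ)) x := by
    intro x
    simp only [add_apply, sub_apply, smul_apply, sum_apply, smul_eq_mul, hderiv, hvi]
    linear_combination h x i
  simp only [hvt, ← realFourierCLM_apply]
  simp only [map_sub, map_add, map_smul, map_sum, sub_apply, add_apply, smul_apply, sum_apply,
    realFourierCLM_lineDerivOp, EuclideanSpace.inner_single_right, one_mul, conj_trivial]
  have hlaplace : ∑ j, 2 * π * Complex.I * ξ j * (2 * π * Complex.I * ξ j * realFourierCLM vi ξ)
      = (2 * π * Complex.I) ^ 2 * realFourierCLM vi ξ * ∑ j, (ξ j : ℂ) ^ 2 := by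
    rw [Finset.mul_sum]
    exact Finset.sum_congr rfl fun j _ ↦ by ring
  rw [hlaplace, EuclideanSpace.sum_ofReal_sq, Complex.real_smul, Complex.real_smul]
  change _ = _ - _ * realFourierCLM vi ξ
  linear_combination (4 * π ^ 2 * η * ‖ξ‖ ^ 2 * realFourierCLM vi ξ) * Complex.I_sq

theorem fourier_ofReal_damped_combination_eq_zero {η α : ℝ}
    (v : 𝓢(EuclideanSpace ℝ ι, EuclideanSpace ℝ ι)) (θ : 𝓢(EuclideanSpace ℝ ι, ℝ))
    {vt : EuclideanSpace ℝ ι → EuclideanSpace ℝ ι} {θt R Lθ Rt Lθt : EuclideanSpace ℝ ι → ℝ}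
    (hmomentum : ∀ x i, vt x i + α * v x i
        - η * (∑ j : ι, fderiv ℝ
            (fun y ↦ fderiv ℝ (fun z ↦ v z i) y (EuclideanSpace.single j 1)) x
            (EuclideanSpace.single j 1))
        - fderiv ℝ (fun y ↦ θ y) x (EuclideanSpace.single i 1) = 0)
    (hdiv : ∀ x, θt x - ∑ j, fderiv ℝ (fun y ↦ v y j) x (EuclideanSpace.single j 1) = 0)
    (hRint : Integrable R) (hLθint : Integrable Lθ) (hRtint : Integrable Rt)
    (hLθtint : Integrable Lθt) {ξ : EuclideanSpace ℝ ι} (hξ : ξ ≠ 0)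
    (hR : 𝓕 (fun x ↦ (R x : ℂ)) ξ
      = Complex.I * (∑ i, (ξ i : ℂ) * 𝓕 (fun x ↦ (v x i : ℂ)) ξ) / (‖ξ‖ : ℂ))
    (hLθ : 𝓕 (fun x ↦ (Lθ x : ℂ)) ξ = ((2 * π * ‖ξ‖ : ℝ) : ℂ) * 𝓕 (fun x ↦ (θ x : ℂ)) ξ)
    (hRt : 𝓕 (fun x ↦ (Rt x : ℂ)) ξ
      = Complex.I * (∑ i, (ξ i : ℂ) * 𝓕 (fun x ↦ (vt x i : ℂ)) ξ) / (‖ξ‖ : ℂ))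
    (hLθt : 𝓕 (fun x ↦ (Lθt x : ℂ)) ξ = ((2 * π * ‖ξ‖ : ℝ) : ℂ) * 𝓕 (fun x ↦ (θt x : ℂ)) ξ) :
    𝓕 (fun x ↦ ((Rt x + η * Lθt x + Lθ x + α * R x : ℝ) : ℂ)) ξ = 0 := by
  have hlin : (fun x ↦ ((Rt x + η * Lθt x + Lθ x + α * R x : ℝ) : ℂ))
      = (fun x ↦ (Rt x : ℂ)) + (η : ℂ) • (fun x ↦ (Lθt x : ℂ)) + (fun x ↦ (Lθ x : ℂ))
        + (α : ℂ) • (fun x ↦ (R x : ℂ)) := by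
    ext x
    simp
  have hfourier : 𝓕 (fun x ↦ ((Rt x + η * Lθt x + Lθ x + α * R x : ℝ) : ℂ)) ξ
      = 𝓕 (fun x ↦ (Rt x : ℂ)) ξ + η * 𝓕 (fun x ↦ (Lθt x : ℂ)) ξ + 𝓕 (fun x ↦ (Lθ x : ℂ)) ξ
        + α * 𝓕 (fun x ↦ (R x : ℂ)) ξ := by
    rw [hlin, Real.fourier_add_of_integrable
      ((hRtint.ofReal.add (hLθtint.ofReal.smul _)).add hLθint.ofReal) (hRint.ofReal.smul _),
      Real.fourier_add_of_integrable (hRtint.ofReal.add (hLθtint.ofReal.smul _)) hLθint.ofReal,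
      Real.fourier_add_of_integrable hRtint.ofReal (hLθtint.ofReal.smul _),
      Real.fourier_const_smul, Real.fourier_const_smul]
    rfl
  set T := 𝓕 (fun x ↦ (θ x : ℂ)) ξ
  set D := ∑ i, (ξ i : ℂ) * 𝓕 (fun x ↦ (v x i : ℂ)) ξ
  have hdiv_vt : ∑ i, (ξ i : ℂ) * 𝓕 (fun x ↦ (vt x i : ℂ)) ξ
      = 2 * π * Complex.I * ‖ξ‖ ^ 2 * T - (4 * π ^ 2 * η * ‖ξ‖ ^ 2 + α) * D := by
    simp only [fourier_ofReal_eq_of_momentum v θ hmomentum, mul_sub, Finset.sum_sub_distrib,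
      ← EuclideanSpace.sum_ofReal_sq, Finset.mul_sum, Finset.sum_mul, D]
    congr 1 <;> exact Finset.sum_congr rfl fun i _ ↦ by ring
  have hn : (‖ξ‖ : ℂ) ≠ 0 := by exact_mod_cast norm_ne_zero_iff.2 hξ
  rw [hfourier, hRt, hdiv_vt, hLθt, fourier_ofReal_eq_of_eq_div v hdiv, hLθ, hR]
  push_cast
  field_simp
  linear_combination 2 * π * ‖ξ‖ ^ 2 * T * Complex.I_sq

end LinearSystem

theorem stmt_7_general (η α : ℝ) (hη : 0 < η)
    (v : ℝ → SchwartzMap (EuclideanSpace ℝ (Fin 2)) (EuclideanSpace ℝ (Fin 2)))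
    (θ : ℝ → SchwartzMap (EuclideanSpace ℝ (Fin 2)) ℝ)
    (vt : ℝ → EuclideanSpace ℝ (Fin 2) → EuclideanSpace ℝ (Fin 2))
    (θt R Lθ Rt Lθt : ℝ → EuclideanSpace ℝ (Fin 2) → ℝ)
    -- the linear PDE
    (hPDE1 : ∀ t x (i : Fin 2),
      vt t x i + α * v t x i
        - η * (∑ j : Fin 2, fderiv ℝ
            (fun y => fderiv ℝ (fun z => v t z i) y (EuclideanSpace.single j 1)) x
            (EuclideanSpace.single j 1))
        - fderiv ℝ (fun y => θ t y) x (EuclideanSpace.single i 1) = 0)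
    (hPDE2 : ∀ t x,
      θt t x - (∑ j : Fin 2,
        fderiv ℝ (fun y => v t y j) x (EuclideanSpace.single j 1)) = 0)
    -- regularity of R = ℛv, Lθ = Λθ and their time derivatives
    (hRreg : ∀ t, Continuous (R t) ∧ Integrable (R t) volume)
    (hLθreg : ∀ t, Continuous (Lθ t) ∧ Integrable (Lθ t) volume)
    (hRtreg : ∀ t, Continuous (Rt t) ∧ Integrable (Rt t) volume)
    (hLθtreg : ∀ t, Continuous (Lθt t) ∧ Integrable (Lθt t) volume)
    -- Fourier characterization of R = ℛv and Lθ = Λθ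
    (hR : ∀ t (ξ : EuclideanSpace ℝ (Fin 2)), ξ ≠ 0 →
      𝓕 (fun x => (R t x : ℂ)) ξ
        = Complex.I * (∑ i : Fin 2, (ξ i : ℂ) * 𝓕 (fun x => (v t x i : ℂ)) ξ) / (‖ξ‖ : ℂ))
    (hLθ : ∀ t (ξ : EuclideanSpace ℝ (Fin 2)),
      𝓕 (fun x => (Lθ t x : ℂ)) ξ
        = ((2 * Real.pi * ‖ξ‖ : ℝ) : ℂ) * 𝓕 (fun x => (θ t x : ℂ)) ξ)
    -- Rt and Lθt are the time derivatives, and the multipliers commute with ∂ₜ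
    (hRtF : ∀ t (ξ : EuclideanSpace ℝ (Fin 2)), ξ ≠ 0 →
      𝓕 (fun x => (Rt t x : ℂ)) ξ
        = Complex.I * (∑ i : Fin 2, (ξ i : ℂ) * 𝓕 (fun x => (vt t x i : ℂ)) ξ) / (‖ξ‖ : ℂ))
    (hLθtF : ∀ t (ξ : EuclideanSpace ℝ (Fin 2)),
      𝓕 (fun x => (Lθt t x : ℂ)) ξ
        = ((2 * Real.pi * ‖ξ‖ : ℝ) : ℂ) * 𝓕 (fun x => (θt t x : ℂ)) ξ) :
    -- conclusion: ∂ₜΩ + (1/η) Ω = (1/η − α) ℛv with Ω = ℛv + ηΛθ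
    ∀ t x, (Rt t x + η * Lθt t x) + (1/η) * (R t x + η * Lθ t x)
      = (1/η - α) * R t x := by
  intro t x
  have hcomb : (fun y ↦ Rt t y + η * Lθt t y + Lθ t y + α * R t y) = 0 :=
    Real.eq_zero_of_fourier_ofReal_eq_zero_of_ne_zero
      ((((hRtreg t).1.add (continuous_const.mul (hLθtreg t).1)).add (hLθreg t).1).add
        (continuous_const.mul (hRreg t).1))
      ((((hRtreg t).2.add ((hLθtreg t).2.const_mul η)).add (hLθreg t).2).add
        ((hRreg t).2.const_mul α))
      fun ξ hξ ↦ fourier_ofReal_damped_combination_eq_zero (v t) (θ t) (hPDE1 t) (hPDE2 t)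
        (hRreg t).2 (hLθreg t).2 (hRtreg t).2 (hLθtreg t).2 hξ (hR t ξ hξ) (hLθ t ξ)
        (hRtF t ξ hξ) (hLθtF t ξ)
  have hx : Rt t x + η * Lθt t x + Lθ t x + α * R t x = 0 := congrFun hcomb x
  field_simp
  linear_combination η * hx

/-- let `η > 0`, `α ≥ 0` and let `(v, θ)` solve the linear system
`∂ₜv + αv − ηΔv − ∇θ = 0`, `∂ₜθ − div v = 0` on `ℝ × ℝ²` with smooth rapidly decaying data.
With `ℛ = Λ^{−1} div` (Fourier symbol `iξ/|ξ|`) and `Λ` (Fourier symbol `2π|ξ|`),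
set `Ω = ℛv + ηΛθ`. Then `∂ₜΩ + (1/η)Ω = (1/η − α)ℛv`. Here `R = ℛv`, `Lθ = Λθ` and their
time derivatives `Rt`, `Lθt` are characterized on the Fourier side. -/
theorem stmt_7 (η α : ℝ) (hη : 0 < η) (hα : 0 ≤ α)
    (v : ℝ → SchwartzMap (EuclideanSpace ℝ (Fin 2)) (EuclideanSpace ℝ (Fin 2)))
    (θ : ℝ → SchwartzMap (EuclideanSpace ℝ (Fin 2)) ℝ)
    (vt : ℝ → EuclideanSpace ℝ (Fin 2) → EuclideanSpace ℝ (Fin 2))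
    (θt R Lθ Rt Lθt : ℝ → EuclideanSpace ℝ (Fin 2) → ℝ)
    -- time derivatives of the solution
    (hvt : ∀ t x (i : Fin 2), HasDerivAt (fun τ => v τ x i) (vt t x i) t)
    (hθt : ∀ t x, HasDerivAt (fun τ => θ τ x) (θt t x) t)
    (hvtInt : ∀ t (i : Fin 2), Integrable (fun x => vt t x i) volume)
    (hθtInt : ∀ t, Integrable (θt t) volume)
    -- the linear PDE
    (hPDE1 : ∀ t x (i : Fin 2),
      vt t x i + α * v t x i
        - η * (∑ j : Fin 2, fderiv ℝ
            (fun y => fderiv ℝ (fun z => v t z i) y (EuclideanSpace.single j 1)) x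
            (EuclideanSpace.single j 1))
        - fderiv ℝ (fun y => θ t y) x (EuclideanSpace.single i 1) = 0)
    (hPDE2 : ∀ t x,
      θt t x - (∑ j : Fin 2,
        fderiv ℝ (fun y => v t y j) x (EuclideanSpace.single j 1)) = 0)
    -- regularity of R = ℛv, Lθ = Λθ and their time derivatives
    (hRreg : ∀ t, Continuous (R t) ∧ Integrable (R t) volume)
    (hLθreg : ∀ t, Continuous (Lθ t) ∧ Integrable (Lθ t) volume)
    (hRtreg : ∀ t, Continuous (Rt t) ∧ Integrable (Rt t) volume)
    (hLθtreg : ∀ t, Continuous (Lθt t) ∧ Integrable (Lθt t) volume)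
    -- Fourier characterization of R = ℛv and Lθ = Λθ
    (hR : ∀ t (ξ : EuclideanSpace ℝ (Fin 2)), ξ ≠ 0 →
      𝓕 (fun x => (R t x : ℂ)) ξ
        = Complex.I * (∑ i : Fin 2, (ξ i : ℂ) * 𝓕 (fun x => (v t x i : ℂ)) ξ) / (‖ξ‖ : ℂ))
    (hLθ : ∀ t (ξ : EuclideanSpace ℝ (Fin 2)),
      𝓕 (fun x => (Lθ t x : ℂ)) ξ
        = ((2 * Real.pi * ‖ξ‖ : ℝ) : ℂ) * 𝓕 (fun x => (θ t x : ℂ)) ξ)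
    -- Rt and Lθt are the time derivatives, and the multipliers commute with ∂ₜ
    (hRt : ∀ t x, HasDerivAt (fun τ => R τ x) (Rt t x) t)
    (hLθt : ∀ t x, HasDerivAt (fun τ => Lθ τ x) (Lθt t x) t)
    (hRtF : ∀ t (ξ : EuclideanSpace ℝ (Fin 2)), ξ ≠ 0 →
      𝓕 (fun x => (Rt t x : ℂ)) ξ
        = Complex.I * (∑ i : Fin 2, (ξ i : ℂ) * 𝓕 (fun x => (vt t x i : ℂ)) ξ) / (‖ξ‖ : ℂ))
    (hLθtF : ∀ t (ξ : EuclideanSpace ℝ (Fin 2)),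
      𝓕 (fun x => (Lθt t x : ℂ)) ξ
        = ((2 * Real.pi * ‖ξ‖ : ℝ) : ℂ) * 𝓕 (fun x => (θt t x : ℂ)) ξ) :
    -- conclusion: ∂ₜΩ + (1/η) Ω = (1/η − α) ℛv with Ω = ℛv + ηΛθ
    ∀ t x, (Rt t x + η * Lθt t x) + (1/η) * (R t x + η * Lθ t x)
      = (1/η - α) * R t x :=
  stmt_7_general η α hη v θ vt θt R Lθ Rt Lθt hPDE1 hPDE2 hRreg hLθreg hRtreg hLθtreg hR hLθ hRtF
    hLθtF
end
end
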